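/- arXiv:2602.18440 — 12 statements merged into one kernel-verified Lean document; each statement's English description precedes it below -/
import Mathlib

section
/- Let Y₁, ..., Y_I ⊂ ℝⁿ be an equidistant spacing with I ≥ 2, and let 𝓘 ⊆ {1,...,I} with both 𝓘 and its complement nonempty. Then the affine hull of ⋃_{i ∈ 𝓘} Y_i and the affine hull of ⋃_{i ∈ 𝓘ᶜ} Y_i are orthogonal, i.e., any difference of two points in the first affine hull is orthogonal to any difference of two points in the second. -/
open RealInnerProductSpace

/-- A family of sets in ℝⁿ is an equidistant spacing if any two points from
distinct classes are at Euclidean distance exactly 1. -/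
def IsEquidistant {n I : ℕ} (Y : Fin I → Set (EuclideanSpace ℝ (Fin n))) : Prop :=
  ∀ i j : Fin I, i ≠ j → ∀ yi ∈ Y i, ∀ yj ∈ Y j, ‖yi - yj‖ = 1

section EuclideanGeometry

variable {V P : Type*} [NormedAddCommGroup V] [InnerProductSpace ℝ V] [MetricSpace P]
  [NormedAddTorsor V P]

/- `s` lies in the perpendicular bisector of any two points of `t`. -/
theorem vectorSpan_isOrtho_of_forall_dist_eq {s t : Set P}
    (h : ∀ p ∈ s, ∀ q₁ ∈ t, ∀ q₂ ∈ t, dist q₁ p = dist q₂ p) :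
    vectorSpan ℝ s ⟂ vectorSpan ℝ t := by
  rw [vectorSpan_def, vectorSpan_def, Submodule.isOrtho_span]
  rintro _ ⟨c₁, hc₁, c₂, hc₂, rfl⟩ _ ⟨p₁, hp₁, p₂, hp₂, rfl⟩
  exact EuclideanGeometry.inner_vsub_vsub_of_dist_eq_of_dist_eq
    (h c₂ hc₂ p₂ hp₂ p₁ hp₁) (h c₁ hc₁ p₂ hp₂ p₁ hp₁)

theorem inner_vsub_vsub_eq_zero_of_forall_dist_eq {s t : Set P}
    (h : ∀ p ∈ s, ∀ q₁ ∈ t, ∀ q₂ ∈ t, dist q₁ p = dist q₂ p)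
    {a b u v : P} (ha : a ∈ affineSpan ℝ s) (hb : b ∈ affineSpan ℝ s)
    (hu : u ∈ affineSpan ℝ t) (hv : v ∈ affineSpan ℝ t) :
    ⟪a -ᵥ b, u -ᵥ v⟫ = 0 := by
  have hab := AffineSubspace.vsub_mem_direction ha hb
  have huv := AffineSubspace.vsub_mem_direction hu hv
  rw [direction_affineSpan] at hab huv
  exact Submodule.isOrtho_iff_inner_eq.mp (vectorSpan_isOrtho_of_forall_dist_eq h) _ hab _ huv

end EuclideanGeometry

theorem IsEquidistant.dist_eq_one {n I : ℕ} {Y : Fin I → Set (EuclideanSpace ℝ (Fin n))}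
    (hY : IsEquidistant Y) (S : Set (Fin I)) {p q : EuclideanSpace ℝ (Fin n)}
    (hp : p ∈ ⋃ i ∈ S, Y i) (hq : q ∈ ⋃ i ∈ Sᶜ, Y i) : dist q p = 1 := by
  simp only [Set.mem_iUnion] at hp hq
  obtain ⟨i, hi, hp⟩ := hp
  obtain ⟨j, hj, hq⟩ := hq
  rw [dist_eq_norm]
  exact hY j i (fun hji => hj (hji ▸ hi)) q hq p hp

theorem strong_orthogonality_general {n I : ℕ}
    (Y : Fin I → Set (EuclideanSpace ℝ (Fin n))) (hY : IsEquidistant Y)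
    (S : Set (Fin I)) :
    ∀ a ∈ affineSpan ℝ (⋃ i ∈ S, Y i), ∀ b ∈ affineSpan ℝ (⋃ i ∈ S, Y i),
    ∀ u ∈ affineSpan ℝ (⋃ i ∈ Sᶜ, Y i), ∀ v ∈ affineSpan ℝ (⋃ i ∈ Sᶜ, Y i),
      ⟪a - b, u - v⟫ = 0 := by
  intro a ha b hb u hu v hv
  refine inner_vsub_vsub_eq_zero_of_forall_dist_eq (fun p hp q₁ hq₁ q₂ hq₂ => ?_) ha hb hu hv
  rw [hY.dist_eq_one S hp hq₁, hY.dist_eq_one S hp hq₂]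

/-- Strong Orthogonality: for an equidistant spacing and a nontrivial subset 𝓘 of
classes, the affine hull of the union over 𝓘 is orthogonal to the affine hull of
the union over the complement. -/
theorem strong_orthogonality {n I : ℕ} (hI : 2 ≤ I)
    (Y : Fin I → Set (EuclideanSpace ℝ (Fin n))) (hY : IsEquidistant Y)
    (S : Set (Fin I)) (hS : S.Nonempty) (hSc : Sᶜ.Nonempty) :
    ∀ a ∈ affineSpan ℝ (⋃ i ∈ S, Y i), ∀ b ∈ affineSpan ℝ (⋃ i ∈ S, Y i),
    ∀ u ∈ affineSpan ℝ (⋃ i ∈ Sᶜ, Y i), ∀ v ∈ affineSpan ℝ (⋃ i ∈ Sᶜ, Y i),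
      ⟪a - b, u - v⟫ = 0 :=
  strong_orthogonality_general Y hY S
end

section
/- Let Y₁, ..., Y_I ⊂ ℝⁿ be an equidistant spacing with I ≥ 2. For each class i there exist a unique point c_i in the affine hull of Y_i and a radius r_i ∈ [0,1] such that ‖y - c_i‖ = r_i for all y ∈ Y_i; moreover, c_i equals the orthogonal projection of any point y_j ∈ Y_j (j ≠ i) onto the affine hull of Y_i. -/
/-!
Fix a class `Y i` and a point `y₀` of another class. Every point of any other class is at
distance `1` from all of `Y i`, and two points each equidistant from a set `S` differ by a
vector orthogonal to the vector span of `S` (the diagonals of a kite are orthogonal). Hence all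
points of all other classes share one orthogonal projection `c` onto the affine hull of `Y i`,
and by Pythagoras every `y ∈ Y i` satisfies `‖y - c‖² = 1 - ‖y₀ - c‖²`. Uniqueness is the
characterization of the orthogonal projection as the point of the subspace from which `y₀`
is seen orthogonally.
-/

open RealInnerProductSpace

open EuclideanGeometry

section EquidistantProjection

variable {V P : Type*} [NormedAddCommGroup V] [InnerProductSpace ℝ V] [MetricSpace P]
  [NormedAddTorsor V P]

lemma vsub_mem_vectorSpan_orthogonal_of_forall_dist_eq {S : Set P} {p q : P} {ρ σ : ℝ}
    (hp : ∀ y ∈ S, dist y p = ρ) (hq : ∀ y ∈ S, dist y q = σ) :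
    q -ᵥ p ∈ (vectorSpan ℝ S)ᗮ := by
  have hle : vectorSpan ℝ S ≤ (ℝ ∙ (q -ᵥ p))ᗮ := by
    rw [vectorSpan_def, Submodule.span_le]
    rintro _ ⟨y, hy, y', hy', rfl⟩
    exact Submodule.mem_orthogonal_singleton_iff_inner_right.2 <|
      inner_vsub_vsub_of_dist_eq_of_dist_eq ((hp y' hy').trans (hp y hy).symm)
        ((hq y' hy').trans (hq y hy).symm)
  exact Submodule.orthogonal_le hle
    (Submodule.le_orthogonal_orthogonal _ (Submodule.mem_span_singleton_self _))

lemma coe_orthogonalProjection_eq_iff_forall_inner {s : AffineSubspace ℝ P} [Nonempty s]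
    [s.direction.HasOrthogonalProjection] {p c : P} :
    (orthogonalProjection s p : P) = c ↔ c ∈ s ∧ ∀ z ∈ s, ⟪p -ᵥ c, z -ᵥ c⟫ = 0 := by
  rw [coe_orthogonalProjection_eq_iff_mem]
  refine and_congr_right fun hc => ⟨fun h z hz => ?_, fun h => ?_⟩
  · exact Submodule.inner_left_of_mem_orthogonal (AffineSubspace.vsub_mem_direction hz hc) h
  · refine (Submodule.mem_orthogonal' _ _).2 fun v hv => ?_
    simpa using h (v +ᵥ c) (AffineSubspace.vadd_mem_of_mem_direction hv hc)

variable {S : Set P} [Nonempty (affineSpan ℝ S)]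
  [(affineSpan ℝ S).direction.HasOrthogonalProjection]

lemma orthogonalProjection_affineSpan_eq_of_forall_dist_eq {p q : P} {ρ σ : ℝ}
    (hp : ∀ y ∈ S, dist y p = ρ) (hq : ∀ y ∈ S, dist y q = σ) :
    orthogonalProjection (affineSpan ℝ S) p = orthogonalProjection (affineSpan ℝ S) q := by
  rw [orthogonalProjection_eq_orthogonalProjection_iff_vsub_mem, direction_affineSpan]
  exact vsub_mem_vectorSpan_orthogonal_of_forall_dist_eq hq hp

lemma dist_orthogonalProjection_affineSpan_sq_of_forall_dist_eq {p : P} {ρ : ℝ}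
    (hp : ∀ y ∈ S, dist y p = ρ) {y : P} (hy : y ∈ S) :
    dist y (orthogonalProjection (affineSpan ℝ S) p) ^ 2 =
      ρ ^ 2 - dist p (orthogonalProjection (affineSpan ℝ S) p) ^ 2 := by
  have := dist_sq_eq_dist_orthogonalProjection_sq_add_dist_orthogonalProjection_sq p
    (subset_affineSpan ℝ S hy)
  rw [hp y hy] at this
  linarith

end EquidistantProjection

/-- Projection Theorem: each class of an equidistant spacing has a unique center
`c` in its affine hull, at constant distance `r ∈ [0,1]` from all its points,
and `c` is the orthogonal projection onto the affine hull of any point of any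
other class (i.e. the difference `y_j - c` is orthogonal to the affine hull). -/
theorem projection_theorem {n I : ℕ} (hI : 2 ≤ I)
    (Y : Fin I → Set (EuclideanSpace ℝ (Fin n)))
    (hne : ∀ i, (Y i).Nonempty) (hY : IsEquidistant Y) :
    ∀ i : Fin I, ∃! c : EuclideanSpace ℝ (Fin n),
      c ∈ affineSpan ℝ (Y i) ∧
      ∃ r : ℝ, r ∈ Set.Icc (0 : ℝ) 1 ∧ (∀ y ∈ Y i, ‖y - c‖ = r) ∧
        ∀ j : Fin I, j ≠ i → ∀ yj ∈ Y j, ∀ z ∈ affineSpan ℝ (Y i),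
          ⟪yj - c, z - c⟫ = 0 := by
  intro i
  have : Nontrivial (Fin I) := Fin.nontrivial_iff_two_le.mpr hI
  obtain ⟨j₀, hj₀⟩ := exists_ne i
  obtain ⟨y₀, hy₀⟩ := hne j₀
  have : Nonempty (affineSpan ℝ (Y i)) := ((hne i).mono (subset_affineSpan ℝ _)).to_subtype
  have hdist : ∀ j ≠ i, ∀ yj ∈ Y j, ∀ y ∈ Y i, dist y yj = 1 := fun j hj yj hyj y hy => by
    rw [dist_eq_norm, hY i j hj.symm y hy yj hyj]
  set c := (orthogonalProjection (affineSpan ℝ (Y i)) y₀ : EuclideanSpace ℝ (Fin n))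
  have hc : ∀ j ≠ i, ∀ yj ∈ Y j, (orthogonalProjection (affineSpan ℝ (Y i)) yj : _) = c :=
    fun j hj yj hyj => congrArg _ <|
      orthogonalProjection_affineSpan_eq_of_forall_dist_eq (hdist j hj yj hyj) (hdist j₀ hj₀ y₀ hy₀)
  refine ⟨c, ⟨orthogonalProjection_mem _, √(1 - dist y₀ c ^ 2),
    ⟨Real.sqrt_nonneg _, Real.sqrt_le_one.mpr (sub_le_self _ (sq_nonneg _))⟩, fun y hy => ?_,
    fun j hj yj hyj => (coe_orthogonalProjection_eq_iff_forall_inner.1 (hc j hj yj hyj)).2⟩, ?_⟩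
  · rw [← dist_eq_norm, ← Real.sqrt_sq dist_nonneg,
      dist_orthogonalProjection_affineSpan_sq_of_forall_dist_eq (hdist j₀ hj₀ y₀ hy₀) hy, one_pow]
  · rintro c' ⟨hc', -, -, -, horth⟩
    exact (coe_orthogonalProjection_eq_iff_forall_inner.2 ⟨hc', horth j₀ hj₀ y₀ hy₀⟩).symm
end

section
/- Let Y₁, ..., Y_I ⊂ ℝⁿ be an equidistant spacing with I ≥ 2, with centers c_i (the circumcenter of Y_i within its affine hull) and radii r_i. Then for all i ≠ j: r_i² + r_j² ≤ 1 and ‖c_i - c_j‖² = 1 - r_i² - r_j². -/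
/-!
If every point of `S` has the same distance to `a` and the same distance to `c`, then `c -ᵥ a` is
orthogonal to the affine span of `S`; when `c` lies in that span, Pythagoras gives
`dist y a ^ 2 = dist y c ^ 2 + dist c a ^ 2` for `y ∈ S`. Applied first with `S = Y i` and `a` any
point of `Y j`, this shows that `Y j` lies on a sphere about `c i` of squared radius `1 - r i ^ 2`;
applied again with `S = Y j` and `a = c i`, it gives `‖c i - c j‖ ^ 2 = 1 - r i ^ 2 - r j ^ 2`.
-/

open RealInnerProductSpace

namespace EuclideanGeometry

variable {V P : Type*} [NormedAddCommGroup V] [InnerProductSpace ℝ V] [MetricSpace P]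
  [NormedAddTorsor V P] {S : Set P} {a c : P} {α β : ℝ}

theorem vsub_mem_direction_affineSpan_orthogonal_of_dist_sq_eq
    (ha : ∀ y ∈ S, dist y a ^ 2 = α) (hc : ∀ y ∈ S, dist y c ^ 2 = β) :
    c -ᵥ a ∈ (affineSpan ℝ S).directionᗮ := by
  have hdist {b : P} {γ : ℝ} (hb : ∀ y ∈ S, dist y b ^ 2 = γ) {p₁ p₂ : P} (hp₁ : p₁ ∈ S)
      (hp₂ : p₂ ∈ S) : dist p₁ b = dist p₂ b :=
    (sq_eq_sq₀ dist_nonneg dist_nonneg).1 ((hb p₁ hp₁).trans (hb p₂ hp₂).symm)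
  have hortho : ℝ ∙ (c -ᵥ a) ⟂ vectorSpan ℝ S := by
    rw [vectorSpan_def, Submodule.isOrtho_span]
    rintro _ rfl _ ⟨p₂, hp₂, p₁, hp₁, rfl⟩
    exact inner_vsub_vsub_of_dist_eq_of_dist_eq (hdist ha hp₁ hp₂) (hdist hc hp₁ hp₂)
  rw [direction_affineSpan]
  exact Submodule.isOrtho_iff_le.1 hortho (Submodule.mem_span_singleton_self _)

theorem dist_sq_eq_sub_of_mem_affineSpan (hcS : c ∈ affineSpan ℝ S)
    (ha : ∀ y ∈ S, dist y a ^ 2 = α) (hc : ∀ y ∈ S, dist y c ^ 2 = β) :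
    dist c a ^ 2 = α - β := by
  obtain ⟨y, hy⟩ := (affineSpan_nonempty ℝ).1 ⟨c, hcS⟩
  have hyc : y -ᵥ c ∈ (affineSpan ℝ S).direction :=
    AffineSubspace.vsub_mem_direction (subset_affineSpan ℝ S hy) hcS
  have hinner : ⟪y -ᵥ c, c -ᵥ a⟫ = 0 :=
    Submodule.inner_right_of_mem_orthogonal hyc
      (vsub_mem_direction_affineSpan_orthogonal_of_dist_sq_eq ha hc)
  have hpyth : dist y a ^ 2 = dist y c ^ 2 + dist c a ^ 2 := by
    simp only [dist_eq_norm_vsub V, sq, ← vsub_add_vsub_cancel y c a]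
    exact norm_add_sq_eq_norm_sq_add_norm_sq_real hinner
  rw [ha y hy, hc y hy] at hpyth
  linarith

end EuclideanGeometry

theorem center_radius_compatibility_general {n I : ℕ}
    (Y : Fin I → Set (EuclideanSpace ℝ (Fin n)))
    (hY : IsEquidistant Y)
    (c : Fin I → EuclideanSpace ℝ (Fin n)) (r : Fin I → ℝ)
    (hc : ∀ i, c i ∈ affineSpan ℝ (Y i))
    (hr : ∀ i, ∀ y ∈ Y i, ‖y - c i‖ = r i) :
    ∀ i j : Fin I, i ≠ j →
      r i ^ 2 + r j ^ 2 ≤ 1 ∧ ‖c i - c j‖ ^ 2 = 1 - r i ^ 2 - r j ^ 2 := by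
  intro i j hij
  have hdist_center (k : Fin I) : ∀ y ∈ Y k, dist y (c k) ^ 2 = r k ^ 2 := fun y hy => by
    rw [dist_eq_norm, hr k y hy]
  have hYj_sphere : ∀ z ∈ Y j, dist z (c i) ^ 2 = 1 - r i ^ 2 := fun z hz => by
    rw [dist_comm]
    refine EuclideanGeometry.dist_sq_eq_sub_of_mem_affineSpan (hc i) (fun y hy => ?_)
      (hdist_center i)
    rw [dist_eq_norm, hY i j hij y hy z hz, one_pow]
  have hcenters := EuclideanGeometry.dist_sq_eq_sub_of_mem_affineSpan (hc j) hYj_sphere (hdist_center j)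
  rw [dist_comm, dist_eq_norm] at hcenters
  exact ⟨by linarith [sq_nonneg ‖c i - c j‖], by linarith⟩

/-- Properties of equidistant spacings: with centers `c i` (the point of the
affine hull of `Y i` equidistant from all points of `Y i`) and radii `r i`, for
all distinct classes `i ≠ j` we have `r i ^ 2 + r j ^ 2 ≤ 1` and
`‖c i - c j‖ ^ 2 = 1 - r i ^ 2 - r j ^ 2`. -/
theorem center_radius_compatibility {n I : ℕ} (hI : 2 ≤ I)
    (Y : Fin I → Set (EuclideanSpace ℝ (Fin n)))
    (hne : ∀ i, (Y i).Nonempty) (hY : IsEquidistant Y)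
    (c : Fin I → EuclideanSpace ℝ (Fin n)) (r : Fin I → ℝ)
    (hc : ∀ i, c i ∈ affineSpan ℝ (Y i))
    (hr : ∀ i, ∀ y ∈ Y i, ‖y - c i‖ = r i) :
    ∀ i j : Fin I, i ≠ j →
      r i ^ 2 + r j ^ 2 ≤ 1 ∧ ‖c i - c j‖ ^ 2 = 1 - r i ^ 2 - r j ^ 2 :=
  center_radius_compatibility_general Y hY c r hc hr
end

section
/- Let Y₁, ..., Y_I ⊂ ℝⁿ be an equidistant spacing with centers c₁, ..., c_I. Then for each i, the affine hull of Y_i is orthogonal to the affine hull of {c₁, ..., c_I}: for any y, y' ∈ Y_i and any j, k, we have ⟨y - y', c_j - c_k⟩ = 0. -/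
open RealInnerProductSpace

/-!
Fix `y, y'` in one class `Y i`. Every center `c m` is equidistant from `y` and `y'`: for `m = i`
because `c i` is the center of `Y i`, and for `m ≠ i` because all of `Y m` lies at distance 1 from
both points, hence in their perpendicular bisector, which is an affine subspace and so contains
the affine hull of `Y m`. Two points of the perpendicular bisector of `[y, y']` differ by a vector
orthogonal to `y - y'`.
-/

namespace EuclideanGeometry

variable {V P : Type*} [NormedAddCommGroup V] [InnerProductSpace ℝ V] [MetricSpace P]
  [NormedAddTorsor V P]

theorem dist_eq_dist_of_mem_affineSpan {s : Set P} {p₁ p₂ c : P}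
    (hs : ∀ z ∈ s, dist p₁ z = dist p₂ z) (hc : c ∈ affineSpan ℝ s) :
    dist p₁ c = dist p₂ c :=
  AffineSubspace.mem_perpBisector_iff_dist_eq'.mp <|
    affineSpan_le.mpr (fun z hz => AffineSubspace.mem_perpBisector_iff_dist_eq'.mpr (hs z hz)) hc

end EuclideanGeometry

theorem tri_part_orthogonality_general {n I : ℕ}
    (Y : Fin I → Set (EuclideanSpace ℝ (Fin n)))
    (hY : IsEquidistant Y)
    (c : Fin I → EuclideanSpace ℝ (Fin n)) (r : Fin I → ℝ)
    (hc : ∀ i, c i ∈ affineSpan ℝ (Y i))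
    (hr : ∀ i, ∀ y ∈ Y i, ‖y - c i‖ = r i) :
    ∀ i : Fin I, ∀ y ∈ Y i, ∀ y' ∈ Y i, ∀ j k : Fin I,
      ⟪y - y', c j - c k⟫ = 0 := by
  intro i y hy y' hy' j k
  have hcenter : ∀ m, dist y' (c m) = dist y (c m) := by
    intro m
    rcases eq_or_ne m i with rfl | hmi
    · rw [dist_eq_norm, dist_eq_norm, hr m y hy, hr m y' hy']
    · refine EuclideanGeometry.dist_eq_dist_of_mem_affineSpan (fun z hz => ?_) (hc m)
      rw [dist_eq_norm, dist_eq_norm, hY i m hmi.symm y hy z hz, hY i m hmi.symm y' hy' z hz]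
  rw [real_inner_comm]
  exact EuclideanGeometry.inner_vsub_vsub_of_dist_eq_of_dist_eq (hcenter k) (hcenter j)

/-- Tri-part Orthogonality: for each class of an equidistant spacing, the affine
hull of the class is orthogonal to the affine hull of the set of centers. -/
theorem tri_part_orthogonality {n I : ℕ} (hI : 2 ≤ I)
    (Y : Fin I → Set (EuclideanSpace ℝ (Fin n)))
    (hne : ∀ i, (Y i).Nonempty) (hY : IsEquidistant Y)
    (c : Fin I → EuclideanSpace ℝ (Fin n)) (r : Fin I → ℝ)
    (hc : ∀ i, c i ∈ affineSpan ℝ (Y i))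
    (hr : ∀ i, ∀ y ∈ Y i, ‖y - c i‖ = r i) :
    ∀ i : Fin I, ∀ y ∈ Y i, ∀ y' ∈ Y i, ∀ j k : Fin I,
      ⟪y - y', c j - c k⟫ = 0 :=
  tri_part_orthogonality_general Y hY c r hc hr
end

section
/- Let r₁, ..., r_I ∈ [0,1] and c₁, ..., c_I ∈ ℝⁿ satisfy ‖c_i - c_j‖² = 1 - r_i² - r_j² for all i ≠ j. Let V₁, ..., V_I be pairwise orthogonal linear subspaces of ℝⁿ, each orthogonal to span{c_j - c_k : j,k}, with dim V_i > 0 whenever r_i > 0. Define Y_i := {y ∈ c_i + V_i : ‖y - c_i‖ = r_i}. Then Y₁, ..., Y_I is an equidistant spacing: ‖y_i - y_j‖ = 1 for all y_i ∈ Y_i, y_j ∈ Y_j with i ≠ j. -/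
open RealInnerProductSpace

theorem norm_add_sub_sq_of_inner_eq_zero {F : Type*} [NormedAddCommGroup F]
    [InnerProductSpace ℝ F] {a b d : F} (hab : ⟪a, b⟫ = 0) (had : ⟪a, d⟫ = 0)
    (hbd : ⟪b, d⟫ = 0) : ‖a + b - d‖ ^ 2 = ‖a‖ ^ 2 + ‖b‖ ^ 2 + ‖d‖ ^ 2 := by
  rw [norm_sub_sq_real, norm_add_sq_real, inner_add_left, hab, had, hbd]
  ring

theorem construction_of_equidistant_spacings_general {n I : ℕ}
    (r : Fin I → ℝ)
    (c : Fin I → EuclideanSpace ℝ (Fin n))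
    (hcc : ∀ i j : Fin I, i ≠ j → ‖c i - c j‖ ^ 2 = 1 - r i ^ 2 - r j ^ 2)
    (V : Fin I → Submodule ℝ (EuclideanSpace ℝ (Fin n)))
    (hVo : ∀ i j : Fin I, i ≠ j → ∀ v ∈ V i, ∀ w ∈ V j, ⟪v, w⟫ = 0)
    (hVc : ∀ i : Fin I, ∀ v ∈ V i, ∀ j k : Fin I, ⟪v, c j - c k⟫ = 0) :
    ∀ i j : Fin I, i ≠ j →
      ∀ yi : EuclideanSpace ℝ (Fin n), yi - c i ∈ V i → ‖yi - c i‖ = r i →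
      ∀ yj : EuclideanSpace ℝ (Fin n), yj - c j ∈ V j → ‖yj - c j‖ = r j →
        ‖yi - yj‖ = 1 := by
  intro i j hij yi hyi hyi_norm yj hyj hyj_norm
  have hsplit : yi - yj = (yi - c i) + (c i - c j) - (yj - c j) := by abel
  have hsq : ‖yi - yj‖ ^ 2 = 1 := by
    rw [hsplit, norm_add_sub_sq_of_inner_eq_zero (hVc i _ hyi i j) (hVo i j hij _ hyi _ hyj)
      ((real_inner_comm _ _).trans (hVc j _ hyj i j)), hyi_norm, hyj_norm, hcc i j hij]
    ring
  exact (pow_eq_one_iff_of_nonneg (norm_nonneg _) two_ne_zero).1 hsq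

/-- Construction of Equidistant Spacings: given compatible radii, centers and
pairwise-orthogonal direction subspaces (each orthogonal to the span of the
differences of centers, with positive dimension whenever the corresponding
radius is positive), the spheres `Y i = {y ∈ c i + V i : ‖y - c i‖ = r i}` form
an equidistant spacing: any two points from distinct classes are at distance 1. -/
theorem construction_of_equidistant_spacings {n I : ℕ}
    (r : Fin I → ℝ) (hr : ∀ i, r i ∈ Set.Icc (0 : ℝ) 1)
    (c : Fin I → EuclideanSpace ℝ (Fin n))
    (hcc : ∀ i j : Fin I, i ≠ j → ‖c i - c j‖ ^ 2 = 1 - r i ^ 2 - r j ^ 2)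
    (V : Fin I → Submodule ℝ (EuclideanSpace ℝ (Fin n)))
    (hVo : ∀ i j : Fin I, i ≠ j → ∀ v ∈ V i, ∀ w ∈ V j, ⟪v, w⟫ = 0)
    (hVc : ∀ i : Fin I, ∀ v ∈ V i, ∀ j k : Fin I, ⟪v, c j - c k⟫ = 0)
    (hdim : ∀ i, 0 < r i → 0 < Module.finrank ℝ (V i)) :
    ∀ i j : Fin I, i ≠ j →
      ∀ yi : EuclideanSpace ℝ (Fin n), yi - c i ∈ V i → ‖yi - c i‖ = r i →
      ∀ yj : EuclideanSpace ℝ (Fin n), yj - c j ∈ V j → ‖yj - c j‖ = r j →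
        ‖yi - yj‖ = 1 :=
  construction_of_equidistant_spacings_general r c hcc V hVo hVc
end

section
/- Let Y₁, ..., Y_I ⊂ ℝⁿ be an equidistant spacing with centers c₁, ..., c_I, and let c*_I be the orthogonal projection of c_I onto the affine hull of {c₁, ..., c_{I-1}}. Define Y'_I := Y_I ∪ refl_{c*_I}(Y_I), where refl_{c*_I}(y) = 2c*_I - y is point reflection through c*_I. Then Y₁, ..., Y_{I-1}, Y'_I is also an equidistant spacing. -/
/-!
Two points that are each equidistant from all points of a set `s` differ by a vector orthogonal
to the direction `V(s)` of the affine hull of `s`. Applied to a center `c i` and a point of another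
class, this places every other class, and with it every other center, in the affine subspace
`c i + V(Y i)ᗮ`. For `y ∈ Y i₀` and `w ∈ Y j` with `j ≠ i₀`, splitting
`y - c* = (y - c i₀) + (c i₀ - c*)` and `w - c* = (w - c j) + (c j - c*)` then shows
`y - c* ⊥ w - c*`, so reflecting `y` through `c*` does not change its distance to `w`.
-/

open RealInnerProductSpace

section Geometry

variable {V P : Type*} [NormedAddCommGroup V] [InnerProductSpace ℝ V] [MetricSpace P]
  [NormedAddTorsor V P]

theorem vsub_mem_orthogonal_vectorSpan_of_forall_dist_eq {s : Set P} {p q : P} {r d : ℝ}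
    (hp : ∀ y ∈ s, dist y p = r) (hq : ∀ y ∈ s, dist y q = d) :
    q -ᵥ p ∈ (vectorSpan ℝ s)ᗮ := by
  have hle : vectorSpan ℝ s ≤ (ℝ ∙ (q -ᵥ p))ᗮ := by
    rw [vectorSpan_def, Submodule.span_le]
    rintro _ ⟨y, hy, y', hy', rfl⟩
    rw [SetLike.mem_coe, Submodule.mem_orthogonal_singleton_iff_inner_right]
    exact EuclideanGeometry.inner_vsub_vsub_of_dist_eq_of_dist_eq
      ((hp y' hy').trans (hp y hy).symm) ((hq y' hy').trans (hq y hy).symm)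
  exact Submodule.orthogonal_le hle
    (Submodule.le_orthogonal_orthogonal _ (Submodule.mem_span_singleton_self _))

end Geometry

theorem norm_two_smul_sub_sub_eq_of_inner_eq_zero {E : Type*} [NormedAddCommGroup E]
    [InnerProductSpace ℝ E] {x y p : E} (h : ⟪x - p, y - p⟫ = 0) :
    ‖(2 : ℝ) • p - x - y‖ = ‖x - y‖ := by
  calc ‖(2 : ℝ) • p - x - y‖ = ‖(y - p) + (x - p)‖ := by
        rw [← norm_neg]; congr 1; rw [two_smul]; abel
    _ = ‖(y - p) - (x - p)‖ := (norm_sub_eq_norm_add (𝕜 := ℝ) h).symm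
    _ = ‖x - y‖ := by rw [← norm_neg]; congr 1; abel

namespace IsEquidistant

variable {n I : ℕ} {Y : Fin I → Set (EuclideanSpace ℝ (Fin n))}

theorem affineSpan_le_mk'_orthogonal (hY : IsEquidistant Y) {i j : Fin I} (hij : i ≠ j)
    {c : EuclideanSpace ℝ (Fin n)} {r : ℝ} (hr : ∀ y ∈ Y i, ‖y - c‖ = r) :
    affineSpan ℝ (Y j) ≤ AffineSubspace.mk' c (vectorSpan ℝ (Y i))ᗮ := by
  refine affineSpan_le.mpr fun w hw => AffineSubspace.mem_mk'.mpr ?_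
  refine vsub_mem_orthogonal_vectorSpan_of_forall_dist_eq (r := r) (d := 1)
    (fun y hy => ?_) (fun y hy => ?_)
  · rw [dist_eq_norm]; exact hr y hy
  · rw [dist_eq_norm]; exact hY i j hij y hy w hw

theorem update (hY : IsEquidistant Y) {i₀ : Fin I} {T : Set (EuclideanSpace ℝ (Fin n))}
    (hT : ∀ j, j ≠ i₀ → ∀ z ∈ T, ∀ w ∈ Y j, ‖z - w‖ = 1) :
    IsEquidistant (Function.update Y i₀ T) := by
  intro i j hij yi hyi yj hyj
  rcases eq_or_ne i i₀ with rfl | hi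
  · rw [Function.update_self] at hyi
    rw [Function.update_of_ne hij.symm] at hyj
    exact hT j hij.symm yi hyi yj hyj
  rcases eq_or_ne j i₀ with rfl | hj
  · rw [Function.update_self] at hyj
    rw [Function.update_of_ne hij] at hyi
    rw [norm_sub_rev]
    exact hT i hij yj hyj yi hyi
  rw [Function.update_of_ne hi] at hyi
  rw [Function.update_of_ne hj] at hyj
  exact hY i j hij yi hyi yj hyj

theorem inner_sub_foot_sub_foot_eq_zero (hY : IsEquidistant Y)
    {c : Fin I → EuclideanSpace ℝ (Fin n)} {r : Fin I → ℝ}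
    (hc : ∀ i, c i ∈ affineSpan ℝ (Y i)) (hr : ∀ i, ∀ y ∈ Y i, ‖y - c i‖ = r i)
    {i₀ : Fin I} {cstar : EuclideanSpace ℝ (Fin n)}
    (hcs1 : cstar ∈ affineSpan ℝ (c '' {i | i ≠ i₀}))
    (hcs2 : ∀ z ∈ affineSpan ℝ (c '' {i | i ≠ i₀}), ⟪c i₀ - cstar, z - cstar⟫ = 0)
    {j : Fin I} (hj : j ≠ i₀) {y w : EuclideanSpace ℝ (Fin n)} (hy : y ∈ Y i₀) (hw : w ∈ Y j) :
    ⟪y - cstar, w - cstar⟫ = 0 := by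
  set A : Fin I → AffineSubspace ℝ (EuclideanSpace ℝ (Fin n)) :=
    fun i => AffineSubspace.mk' (c i) (vectorSpan ℝ (Y i))ᗮ
  have hcA : ∀ i k, c k ∈ A i := by
    intro i k
    rcases eq_or_ne i k with rfl | hik
    · exact AffineSubspace.self_mem_mk' _ _
    · exact hY.affineSpan_le_mk'_orthogonal hik (hr i) (hc k)
  have hcsA : ∀ i, cstar ∈ A i := fun i =>
    affineSpan_le.mpr (by rintro _ ⟨k, -, rfl⟩; exact hcA i k) hcs1
  have hsub : ∀ i {p q}, p ∈ A i → q ∈ A i → p - q ∈ (vectorSpan ℝ (Y i))ᗮ :=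
    fun i _ _ hp hq => by simpa [A] using AffineSubspace.vsub_mem_direction hp hq
  have h₁ : ⟪y - c i₀, w - cstar⟫ = 0 :=
    Submodule.inner_right_of_mem_orthogonal
      (vsub_mem_vectorSpan_of_mem_affineSpan_of_mem_affineSpan (mem_affineSpan ℝ hy) (hc i₀))
      (hsub i₀ (hY.affineSpan_le_mk'_orthogonal hj.symm (hr i₀) (mem_affineSpan ℝ hw))
        (hcsA i₀))
  have h₂ : ⟪c i₀ - cstar, w - c j⟫ = 0 :=
    Submodule.inner_left_of_mem_orthogonal
      (vsub_mem_vectorSpan_of_mem_affineSpan_of_mem_affineSpan (mem_affineSpan ℝ hw) (hc j))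
      (hsub j (hcA j i₀) (hcsA j))
  have h₃ : ⟪c i₀ - cstar, c j - cstar⟫ = 0 := hcs2 _ (subset_affineSpan ℝ _ ⟨j, hj, rfl⟩)
  calc ⟪y - cstar, w - cstar⟫
      = ⟪y - c i₀, w - cstar⟫ + ⟪c i₀ - cstar, w - c j⟫ + ⟪c i₀ - cstar, c j - cstar⟫ := by
        simp only [inner_sub_left, inner_sub_right]; ring
    _ = 0 := by rw [h₁, h₂, h₃]; ring

end IsEquidistant

theorem ortho_reflection_lemma_general {n I : ℕ}
    (Y : Fin I → Set (EuclideanSpace ℝ (Fin n)))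
    (hY : IsEquidistant Y)
    (c : Fin I → EuclideanSpace ℝ (Fin n)) (r : Fin I → ℝ)
    (hc : ∀ i, c i ∈ affineSpan ℝ (Y i))
    (hr : ∀ i, ∀ y ∈ Y i, ‖y - c i‖ = r i)
    (i₀ : Fin I) (cstar : EuclideanSpace ℝ (Fin n))
    (hcs1 : cstar ∈ affineSpan ℝ (c '' {i | i ≠ i₀}))
    (hcs2 : ∀ z ∈ affineSpan ℝ (c '' {i | i ≠ i₀}),
      ⟪c i₀ - cstar, z - cstar⟫ = 0) :
    IsEquidistant
      (Function.update Y i₀ (Y i₀ ∪ (fun y => (2 : ℝ) • cstar - y) '' Y i₀)) := by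
  refine hY.update fun j hj z hz w hw => ?_
  rcases hz with hz | ⟨y, hy, rfl⟩
  · exact hY i₀ j hj.symm z hz w hw
  · rw [norm_two_smul_sub_sub_eq_of_inner_eq_zero
      (hY.inner_sub_foot_sub_foot_eq_zero hc hr hcs1 hcs2 hj hy hw)]
    exact hY i₀ j hj.symm y hy w hw

/-- Ortho-Reflection Lemma: let `c i` be the centers of an equidistant spacing
and let `cstar` be the orthogonal projection of the center of the distinguished
class `i₀` onto the affine hull of the other centers.  Enlarging class `i₀` by
its point-reflection through `cstar` again yields an equidistant spacing. -/
theorem ortho_reflection_lemma {n I : ℕ}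
    (Y : Fin I → Set (EuclideanSpace ℝ (Fin n)))
    (hne : ∀ i, (Y i).Nonempty) (hY : IsEquidistant Y)
    (c : Fin I → EuclideanSpace ℝ (Fin n)) (r : Fin I → ℝ)
    (hc : ∀ i, c i ∈ affineSpan ℝ (Y i))
    (hr : ∀ i, ∀ y ∈ Y i, ‖y - c i‖ = r i)
    (i₀ : Fin I) (cstar : EuclideanSpace ℝ (Fin n))
    (hcs1 : cstar ∈ affineSpan ℝ (c '' {i | i ≠ i₀}))
    (hcs2 : ∀ z ∈ affineSpan ℝ (c '' {i | i ≠ i₀}),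
      ⟪c i₀ - cstar, z - cstar⟫ = 0) :
    IsEquidistant
      (Function.update Y i₀ (Y i₀ ∪ (fun y => (2 : ℝ) • cstar - y) '' Y i₀)) :=
  ortho_reflection_lemma_general Y hY c r hc hr i₀ cstar hcs1 hcs2
end

section
/- Let Y₁, ..., Y_I ⊂ ℝⁿ be a maximal equidistant spacing (maximal under inclusion among equidistant spacings with I classes in ℝⁿ) with centers c₁, ..., c_I. Then c_I lies in the affine hull of {c₁, ..., c_{I-1}}. -/
open RealInnerProductSpace

/-- An equidistant spacing is maximal if it cannot be enlarged class-wise while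
remaining an equidistant spacing. -/
def IsMaximalEquidistant {n I : ℕ} (Y : Fin I → Set (EuclideanSpace ℝ (Fin n))) : Prop :=
  IsEquidistant Y ∧
    ∀ Y' : Fin I → Set (EuclideanSpace ℝ (Fin n)),
      IsEquidistant Y' → (∀ i, Y i ⊆ Y' i) → ∀ i, Y' i = Y i

/-
The points at distance `1` from every point of the other classes form a sphere centred at a point
`q` of the affine hull of those classes, lying in the affine subspace through `q` orthogonal to
them. By maximality this sphere is the class `Y i₀` itself, so its center `c i₀` is `q`.
Every center is equidistant from any two points of a single class, so the directions between
centers are orthogonal to the direction of every class. Splitting `c i₀ - c j₀` into directions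
between other centers plus directions inside other classes, the second part lies in, and is
orthogonal to, the span of the centers, hence vanishes.
-/

section InnerProductSpace

variable {E : Type*} [NormedAddCommGroup E] [InnerProductSpace ℝ E]

open EuclideanGeometry AffineSubspace Submodule Set

theorem affineSpan_le_perpBisector {U : Set E} {a b : E} (h : ∀ y ∈ U, ‖y - a‖ = ‖y - b‖) :
    affineSpan ℝ U ≤ perpBisector a b :=
  affineSpan_le.2 fun y hy => mem_perpBisector_iff_dist_eq.2 <| by
    rw [dist_eq_norm, dist_eq_norm, h y hy]

theorem norm_sub_eq_of_mem_affineSpan {U : Set E} {a b p : E} (h : ∀ y ∈ U, ‖y - a‖ = ‖y - b‖)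
    (hp : p ∈ affineSpan ℝ U) : ‖p - a‖ = ‖p - b‖ := by
  simpa [dist_eq_norm] using mem_perpBisector_iff_dist_eq.1 (affineSpan_le_perpBisector h hp)

theorem sub_mem_orthogonal_vectorSpan {U : Set E} {a b : E} (h : ∀ y ∈ U, ‖y - a‖ = ‖y - b‖) :
    a - b ∈ (vectorSpan ℝ U)ᗮ := by
  have hle := direction_le (affineSpan_le_perpBisector fun y hy => (h y hy).symm)
  rw [direction_affineSpan, direction_perpBisector] at hle
  exact (span_singleton_le_iff_mem _ _).1 (isOrtho_iff_le.1 (isOrtho_iff_le.2 hle).symm)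

theorem norm_sub_sq_eq_of_mem_orthogonal {W : Submodule ℝ E} {x q y : E} (hq : q - y ∈ W)
    (hx : x - q ∈ Wᗮ) : ‖x - y‖ ^ 2 = ‖x - q‖ ^ 2 + ‖q - y‖ ^ 2 := by
  rw [← sub_add_sub_cancel x q y, norm_add_sq_real, inner_left_of_mem_orthogonal hq hx]
  ring

theorem exists_mem_affineSpan_forall_norm_sub_eq_iff [FiniteDimensional ℝ E] {U : Set E} {R : ℝ}
    {x₀ y₀ : E} (hy₀ : y₀ ∈ U) (hx₀ : ∀ y ∈ U, ‖x₀ - y‖ = R) :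
    ∃ q ∈ affineSpan ℝ U, ∀ x,
      (∀ y ∈ U, ‖x - y‖ = R) ↔ x - q ∈ (vectorSpan ℝ U)ᗮ ∧ ‖x - q‖ = ‖x₀ - q‖ := by
  set W := vectorSpan ℝ U
  -- `q := y₀ + a` is the orthogonal projection of `x₀` onto `affineSpan ℝ U`.
  obtain ⟨a, ha, b, hb, hab⟩ := W.exists_add_mem_mem_orthogonal (x₀ - y₀)
  have hqU : ∀ y ∈ U, y₀ + a - y ∈ W := fun y hy => by
    rw [add_sub_right_comm]
    exact W.add_mem (vsub_mem_vectorSpan ℝ hy₀ hy) ha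
  have hx₀q : x₀ - (y₀ + a) = b := by rw [← sub_sub, hab, add_sub_cancel_left]
  have hR : 0 ≤ R := hx₀ y₀ hy₀ ▸ norm_nonneg _
  refine ⟨y₀ + a, ?_, fun x => ⟨fun hx => ?_, fun ⟨hxW, hxq⟩ y hy => ?_⟩⟩
  · rw [add_comm]
    exact vadd_mem_of_mem_direction (by rwa [direction_affineSpan]) (subset_affineSpan ℝ U hy₀)
  · have hxW : x - (y₀ + a) ∈ Wᗮ := by
      rw [← sub_add_sub_cancel x x₀, hx₀q]
      refine add_mem (sub_mem_orthogonal_vectorSpan fun y hy => ?_) hb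
      rw [norm_sub_rev, hx y hy, norm_sub_rev, hx₀ y hy]
    refine ⟨hxW, (pow_left_inj₀ (norm_nonneg _) (norm_nonneg _) two_ne_zero).1 ?_⟩
    have h := norm_sub_sq_eq_of_mem_orthogonal (hqU y₀ hy₀) hxW
    have h₀ := norm_sub_sq_eq_of_mem_orthogonal (hqU y₀ hy₀) (hx₀q ▸ hb)
    rw [hx y₀ hy₀] at h
    rw [hx₀ y₀ hy₀] at h₀
    linarith
  · rw [← pow_left_inj₀ (norm_nonneg _) hR two_ne_zero,
      norm_sub_sq_eq_of_mem_orthogonal (hqU y hy) hxW, hxq,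
      ← norm_sub_sq_eq_of_mem_orthogonal (hqU y hy) (hx₀q ▸ hb), hx₀ y hy]

theorem eq_of_mem_affineSpan_of_forall_norm_sub_eq {S : Set E} {K : Submodule ℝ E} {q c : E}
    {ρ r : ℝ} (hS : ∀ x, x ∈ S ↔ x - q ∈ K ∧ ‖x - q‖ = ρ) (hc : c ∈ affineSpan ℝ S)
    (hr : ∀ s ∈ S, ‖s - c‖ = r) : c = q := by
  have hcK : c - q ∈ K :=
    mem_mk'.1 (affineSpan_le.2 (fun x hx => mem_mk'.2 ((hS x).1 hx).1) hc)
  obtain ⟨s, hs⟩ := (affineSpan_nonempty ℝ).1 ⟨c, hc⟩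
  by_contra hcq
  have hd : 0 < ‖c - q‖ := norm_pos_iff.2 (sub_ne_zero.2 hcq)
  rcases (((hS s).1 hs).2 ▸ norm_nonneg _ : 0 ≤ ρ).eq_or_lt with rfl | hρ
  · have hSq : S ⊆ {q} := fun x hx => by simpa [sub_eq_zero] using ((hS x).1 hx).2
    exact hcq ((mem_affineSpan_singleton ℝ E).1 (affineSpan_mono ℝ hSq hc))
  -- `q ± v` lie on the sphere and are equidistant from `c`, forcing `⟪v, c - q⟫ = 0`, although
  -- `v` is a positive multiple of `c - q`.
  set v := (ρ / ‖c - q‖) • (c - q)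
  have hvK : v ∈ K := K.smul_mem _ hcK
  have hv : ‖v‖ = ρ := by
    rw [norm_smul, Real.norm_of_nonneg (div_nonneg hρ.le hd.le), div_mul_cancel₀ _ hd.ne']
  have hadd : q + v ∈ S := (hS _).2 (by simpa using ⟨hvK, hv⟩)
  have hsub : q - v ∈ S := (hS _).2 (by simpa using ⟨hvK, hv⟩)
  have heq : ‖v - (c - q)‖ ^ 2 = ‖v + (c - q)‖ ^ 2 := by
    rw [← norm_neg (v + _), show -(v + (c - q)) = q - v - c by abel,
      show v - (c - q) = q + v - c by abel, hr _ hadd, hr _ hsub]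
  have hinner : ⟪v, c - q⟫ = ρ * ‖c - q‖ := by
    rw [real_inner_smul_left, real_inner_self_eq_norm_sq]
    field_simp
  rw [norm_sub_sq_real, norm_add_sq_real, hinner] at heq
  nlinarith

theorem mem_affineSpan_image_of_mem_affineSpan_biUnion {ι : Type*} {Y : ι → Set E} {c : ι → E}
    (hc : ∀ i, c i ∈ affineSpan ℝ (Y i))
    (hortho : ∀ i, vectorSpan ℝ (range c) ⟂ vectorSpan ℝ (Y i)) {J : Set ι} {x : E}
    (hx : x ∈ affineSpan ℝ (range c)) (hxY : x ∈ affineSpan ℝ (⋃ j ∈ J, Y j)) :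
    x ∈ affineSpan ℝ (c '' J) := by
  obtain ⟨y, hy⟩ := (affineSpan_nonempty ℝ).1 ⟨x, hxY⟩
  obtain ⟨j, hj, -⟩ := mem_iUnion₂.1 hy
  set D := vectorSpan ℝ (c '' J)
  set V := ⨆ i, vectorSpan ℝ (Y i)
  set L := vectorSpan ℝ (range c)
  have hDL : D ≤ L := vectorSpan_mono ℝ (image_subset_range c J)
  have hVL : Disjoint V L := (isOrtho_iSup_left.2 fun i => (hortho i).symm).disjoint
  have hspan : affineSpan ℝ (⋃ j ∈ J, Y j) ≤ mk' (c j) (D ⊔ V) := by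
    refine affineSpan_le.2 fun y hy => ?_
    obtain ⟨k, hk, hyk⟩ := mem_iUnion₂.1 hy
    have hyc : y - c k ∈ V := mem_iSup_of_mem k <| by
      simpa [direction_affineSpan] using vsub_mem_direction (subset_affineSpan ℝ _ hyk) (hc k)
    rw [SetLike.mem_coe, mem_mk', vsub_eq_sub, ← sub_add_sub_cancel y (c k)]
    exact add_mem (mem_sup_right hyc)
      (mem_sup_left (vsub_mem_vectorSpan ℝ (mem_image_of_mem c hk) (mem_image_of_mem c hj)))
  have hxL : x - c j ∈ L := by
    simpa [direction_affineSpan] using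
      vsub_mem_direction hx (subset_affineSpan ℝ _ (mem_range_self j))
  have hxD : x - c j ∈ D := by
    have h := (sup_inf_assoc_of_le V hDL).le ⟨mem_mk'.1 (hspan hxY), hxL⟩
    rwa [hVL.eq_bot, sup_bot_eq] at h
  rw [← vsub_right_mem_direction_iff_mem (subset_affineSpan ℝ _ (mem_image_of_mem c hj)),
    direction_affineSpan]
  exact hxD

end InnerProductSpace

section Spacing

open Set

variable {n I : ℕ} {Y : Fin I → Set (EuclideanSpace ℝ (Fin n))}

theorem IsMaximalEquidistant.mem_iff (hmax : IsMaximalEquidistant Y) {i : Fin I}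
    {x : EuclideanSpace ℝ (Fin n)} : x ∈ Y i ↔ ∀ j ≠ i, ∀ y ∈ Y j, ‖x - y‖ = 1 := by
  refine ⟨fun hx j hj y hy => hmax.1 i j hj.symm x hx y hy, fun hx => ?_⟩
  set Y' := Function.update Y i (insert x (Y i))
  have hY'i : Y' i = insert x (Y i) := Function.update_self ..
  have hY' : ∀ k ≠ i, Y' k = Y k := fun k hk => Function.update_of_ne hk ..
  have hequi : IsEquidistant Y' := by
    intro k l hkl a ha b hb
    by_cases hk : k = i <;> by_cases hl : l = i
    · exact absurd (hk.trans hl.symm) hkl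
    · rw [hk, hY'i, mem_insert_iff] at ha
      rw [hY' l hl] at hb
      rcases ha with rfl | ha
      exacts [hx l hl b hb, hmax.1 _ _ (hk ▸ hkl) a ha b hb]
    · rw [hY' k hk] at ha
      rw [hl, hY'i, mem_insert_iff] at hb
      rcases hb with rfl | hb
      exacts [norm_sub_rev a b ▸ hx k hk a ha, hmax.1 _ _ (hl ▸ hkl) a ha b hb]
    · rw [hY' k hk] at ha
      rw [hY' l hl] at hb
      exact hmax.1 _ _ hkl a ha b hb
  have hle : ∀ k, Y k ⊆ Y' k := fun k => by
    by_cases hk : k = i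
    · rw [hk, hY'i]
      exact subset_insert x (Y i)
    · rw [hY' k hk]
  rw [← hmax.2 Y' hequi hle i, hY'i]
  exact mem_insert x (Y i)

theorem IsEquidistant.isOrtho_vectorSpan_range (hY : IsEquidistant Y)
    {c : Fin I → EuclideanSpace ℝ (Fin n)} {r : Fin I → ℝ} (hc : ∀ i, c i ∈ affineSpan ℝ (Y i))
    (hr : ∀ i, ∀ y ∈ Y i, ‖y - c i‖ = r i) (m : Fin I) :
    vectorSpan ℝ (range c) ⟂ vectorSpan ℝ (Y m) := by
  rw [Submodule.isOrtho_comm, Submodule.isOrtho_iff_le, vectorSpan_def, Submodule.span_le]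
  rintro _ ⟨a, ha, b, hb, rfl⟩
  refine sub_mem_orthogonal_vectorSpan (forall_mem_range.2 fun j => ?_)
  by_cases hj : j = m
  · subst hj
    rw [norm_sub_rev, hr j a ha, norm_sub_rev, hr j b hb]
  · refine norm_sub_eq_of_mem_affineSpan (fun y hy => ?_) (hc j)
    rw [hY j m hj y hy a ha, hY j m hj y hy b hb]

theorem IsMaximalEquidistant.center_mem_affineSpan_biUnion (hmax : IsMaximalEquidistant Y)
    {i j : Fin I} (hji : j ≠ i) (hi : (Y i).Nonempty) (hj : (Y j).Nonempty)
    {c : EuclideanSpace ℝ (Fin n)} {r : ℝ} (hc : c ∈ affineSpan ℝ (Y i))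
    (hr : ∀ y ∈ Y i, ‖y - c‖ = r) : c ∈ affineSpan ℝ (⋃ k ∈ {k | k ≠ i}, Y k) := by
  obtain ⟨x₀, hx₀⟩ := hi
  obtain ⟨y₀, hy₀⟩ := hj
  have hmem : ∀ x, x ∈ Y i ↔ ∀ y ∈ ⋃ k ∈ {k | k ≠ i}, Y k, ‖x - y‖ = 1 := fun x => by
    rw [hmax.mem_iff]
    simp only [mem_iUnion₂]
    exact ⟨fun h y ⟨k, hk, hy⟩ => h k hk y hy, fun h k hk y hy => h y ⟨k, hk, hy⟩⟩
  obtain ⟨q, hq, hsphere⟩ :=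
    exists_mem_affineSpan_forall_norm_sub_eq_iff (mem_biUnion hji hy₀) ((hmem x₀).1 hx₀)
  rwa [eq_of_mem_affineSpan_of_forall_norm_sub_eq (fun x => (hmem x).trans (hsphere x)) hc hr]

end Spacing

/-- For a maximal equidistant spacing, each center lies in the affine hull of
the remaining centers. -/
theorem center_in_affine_hull_of_others {n I : ℕ} (hI : 2 ≤ I)
    (Y : Fin I → Set (EuclideanSpace ℝ (Fin n)))
    (hne : ∀ i, (Y i).Nonempty) (hmax : IsMaximalEquidistant Y)
    (c : Fin I → EuclideanSpace ℝ (Fin n)) (r : Fin I → ℝ)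
    (hc : ∀ i, c i ∈ affineSpan ℝ (Y i))
    (hr : ∀ i, ∀ y ∈ Y i, ‖y - c i‖ = r i) :
    ∀ i₀ : Fin I, c i₀ ∈ affineSpan ℝ (c '' {i | i ≠ i₀}) := by
  intro i₀
  have : Nontrivial (Fin I) := Fin.nontrivial_iff_two_le.2 hI
  obtain ⟨j₀, hj₀⟩ := exists_ne i₀
  exact mem_affineSpan_image_of_mem_affineSpan_biUnion hc
    (hmax.1.isOrtho_vectorSpan_range hc hr) (subset_affineSpan ℝ _ (Set.mem_range_self i₀))
    (hmax.center_mem_affineSpan_biUnion hj₀ (hne i₀) (hne j₀) (hc i₀) (hr i₀))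
end

section
/- Let Y₁, ..., Y_I ⊂ ℝⁿ be a maximal equidistant spacing with centers c₁, ..., c_I. If two of the centers coincide (c_i = c_j for some i ≠ j), then all centers coincide: c₁ = c₂ = ... = c_I. -/
open RealInnerProductSpace

/-!
Each center `cᵢ` is the foot of the perpendicular from any point of another class onto the
affine hull of `Yᵢ`, so Pythagoras gives `‖y - cᵢ‖² + rᵢ² = 1` for `y` outside `Yᵢ`. If
`cᵢ = cⱼ =: d`, comparing these identities (with a point of a third class `Yₖ`) forces
`rᵢ² = 1/2`, and then every point of every class lies at squared distance `1/2` from `d`.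
By the parallelogram law, the point reflection through `d` of a point of `Yₖ` is then again at
distance `1` from every other class, so maximality makes each `Yₖ` symmetric about `d`. Applying the parallelogram law
once more to a point of `Yₖ`, its mirror image and `cₖ` gives `2 rₖ² = 1 + 2 ‖d - cₖ‖²`, while
Pythagoras gives `rₖ² + ‖d - cₖ‖² = 1/2`; hence `cₖ = d`.
-/

theorem norm_sub_sq_add_sq_of_mem_affineSpan {E : Type*} [NormedAddCommGroup E]
    [InnerProductSpace ℝ E] {s : Set E} {c q : E} {r ρ : ℝ} (hc : c ∈ affineSpan ℝ s)
    (hr : ∀ y ∈ s, ‖y - c‖ = r) (hρ : ∀ y ∈ s, ‖y - q‖ = ρ) :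
    ‖q - c‖ ^ 2 + r ^ 2 = ρ ^ 2 := by
  obtain ⟨y₀, hy₀⟩ := (affineSpan_nonempty ℝ).mp ⟨c, hc⟩
  have horth : vectorSpan ℝ s ≤ (ℝ ∙ (q - c))ᗮ := by
    rw [vectorSpan_def, Submodule.span_le]
    rintro _ ⟨y, hy, y', hy', rfl⟩
    rw [SetLike.mem_coe, Submodule.mem_orthogonal_singleton_iff_inner_right]
    exact EuclideanGeometry.inner_vsub_vsub_of_dist_eq_of_dist_eq (p₁ := y') (p₂ := y)
      (by rw [dist_eq_norm, dist_eq_norm, hr y hy, hr y' hy'])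
      (by rw [dist_eq_norm, dist_eq_norm, hρ y hy, hρ y' hy'])
  have h0 : ⟪y₀ - c, q - c⟫ = 0 := by
    rw [← Submodule.mem_orthogonal_singleton_iff_inner_left]
    exact horth (vsub_mem_vectorSpan_of_mem_affineSpan_of_mem_affineSpan
      (subset_affineSpan ℝ s hy₀) hc)
  rw [← hr y₀ hy₀, ← hρ y₀ hy₀, ← sub_sub_sub_cancel_right y₀ q c, norm_sub_sq_real (y₀ - c),
    h0]
  ring

section Equidistant

variable {n I : ℕ} {Y : Fin I → Set (EuclideanSpace ℝ (Fin n))}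

theorem IsEquidistant.norm_sub_sq_add_sq_of_mem_affineSpan (hY : IsEquidistant Y)
    {i m : Fin I} (him : i ≠ m) {c : EuclideanSpace ℝ (Fin n)} {r : ℝ}
    (hc : c ∈ affineSpan ℝ (Y i)) (hr : ∀ y ∈ Y i, ‖y - c‖ = r)
    {y : EuclideanSpace ℝ (Fin n)} (hy : y ∈ Y m) :
    ‖y - c‖ ^ 2 + r ^ 2 = 1 := by
  simpa using _root_.norm_sub_sq_add_sq_of_mem_affineSpan hc hr
    (fun z hz => hY i m him z hz y hy)

theorem IsEquidistant.norm_sub_sq_eq_half_of_center_eq (hY : IsEquidistant Y)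
    {c : Fin I → EuclideanSpace ℝ (Fin n)} {r : Fin I → ℝ}
    (hc : ∀ i, c i ∈ affineSpan ℝ (Y i)) (hr : ∀ i, ∀ y ∈ Y i, ‖y - c i‖ = r i)
    {i j k : Fin I} (hij : i ≠ j) (hcij : c i = c j) (hki : k ≠ i) (hkj : k ≠ j)
    (hYj : (Y j).Nonempty) (hYk : (Y k).Nonempty) :
    ∀ m, ∀ y ∈ Y m, ‖y - c i‖ ^ 2 = 1 / 2 := by
  have pyth {a m : Fin I} (ham : a ≠ m) {y} (hy : y ∈ Y m) : ‖y - c a‖ ^ 2 + r a ^ 2 = 1 :=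
    hY.norm_sub_sq_add_sq_of_mem_affineSpan ham (hc a) (hr a) hy
  have hri : r i ^ 2 = 1 / 2 := by
    obtain ⟨yj, hyj⟩ := hYj
    obtain ⟨yk, hyk⟩ := hYk
    have hj := pyth hij hyj
    have hk₁ := pyth hki.symm hyk
    have hk₂ := pyth hkj.symm hyk
    rw [hcij, hr j yj hyj] at hj
    rw [hcij] at hk₁
    linarith
  intro m y hy
  rcases eq_or_ne m i with rfl | hmi
  · rw [hr m y hy, hri]
  · linarith [pyth hmi.symm hy]

theorem IsMaximalEquidistant.mem_of_forall_norm_sub_eq_one (hY : IsMaximalEquidistant Y)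
    {k : Fin I} {p : EuclideanSpace ℝ (Fin n)} (hp : ∀ m ≠ k, ∀ y ∈ Y m, ‖p - y‖ = 1) :
    p ∈ Y k := by
  set Y' : Fin I → Set (EuclideanSpace ℝ (Fin n)) := fun l => {y | y ∈ Y l ∨ (l = k ∧ y = p)}
  have hY' : IsEquidistant Y' := by
    rintro a b hab ya (hya | ⟨rfl, rfl⟩) yb (hyb | ⟨rfl, rfl⟩)
    · exact hY.1 a b hab ya hya yb hyb
    · rw [norm_sub_rev]
      exact hp a hab ya hya
    · exact hp b hab.symm yb hyb
    · exact absurd rfl hab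
  rw [← hY.2 Y' hY' (fun l y hy => Or.inl hy) k]
  exact Or.inr ⟨rfl, rfl⟩

theorem IsMaximalEquidistant.pointReflection_mem (hY : IsMaximalEquidistant Y)
    {d : EuclideanSpace ℝ (Fin n)} (hd : ∀ m, ∀ y ∈ Y m, ‖y - d‖ ^ 2 = 1 / 2)
    {k : Fin I} {y : EuclideanSpace ℝ (Fin n)} (hy : y ∈ Y k) :
    Equiv.pointReflection d y ∈ Y k := by
  refine hY.mem_of_forall_norm_sub_eq_one fun m hmk y' hy' => ?_
  have hpar := parallelogram_law_with_norm ℝ (y' - d) (y - d)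
  have hsum : y' - d + (y - d) = -(Equiv.pointReflection d y - y') := by
    rw [Equiv.pointReflection_apply, vsub_eq_sub, vadd_eq_add]
    abel
  rw [hsum, norm_neg, sub_sub_sub_cancel_right, hY.1 m k hmk y' hy' y hy] at hpar
  rw [← pow_eq_one_iff_of_nonneg (norm_nonneg _) two_ne_zero]
  linarith [hd m y' hy', hd k y hy]

theorem IsMaximalEquidistant.center_eq (hY : IsMaximalEquidistant Y)
    {d : EuclideanSpace ℝ (Fin n)} (hd : ∀ m, ∀ y ∈ Y m, ‖y - d‖ ^ 2 = 1 / 2)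
    {k : Fin I} {c : EuclideanSpace ℝ (Fin n)} {r : ℝ}
    (hc : c ∈ affineSpan ℝ (Y k)) (hr : ∀ y ∈ Y k, ‖y - c‖ = r) : c = d := by
  obtain ⟨y, hy⟩ := (affineSpan_nonempty ℝ).mp ⟨c, hc⟩
  have hpyth : ‖d - c‖ ^ 2 + r ^ 2 = ‖y - d‖ ^ 2 :=
    norm_sub_sq_add_sq_of_mem_affineSpan hc hr fun z hz => by
      rw [← sq_eq_sq₀ (norm_nonneg _) (norm_nonneg _), hd k z hz, hd k y hy]
  have hpar := parallelogram_law_with_norm ℝ (y - d) (d - c)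
  have hdiff : y - d - (d - c) = -(Equiv.pointReflection d y - c) := by
    rw [Equiv.pointReflection_apply, vsub_eq_sub, vadd_eq_add]
    abel
  rw [sub_add_sub_cancel, hdiff, norm_neg, hr y hy, hr _ (hY.pointReflection_mem hd hy)] at hpar
  have hdc : ‖d - c‖ ^ 2 = 0 := by linarith [hd k y hy]
  rw [sq_eq_zero_iff, norm_eq_zero, sub_eq_zero] at hdc
  exact hdc.symm

end Equidistant

theorem two_centers_coincide_implies_all_general {n I : ℕ}
    (Y : Fin I → Set (EuclideanSpace ℝ (Fin n)))
    (hne : ∀ i, (Y i).Nonempty) (hmax : IsMaximalEquidistant Y)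
    (c : Fin I → EuclideanSpace ℝ (Fin n)) (r : Fin I → ℝ)
    (hc : ∀ i, c i ∈ affineSpan ℝ (Y i))
    (hr : ∀ i, ∀ y ∈ Y i, ‖y - c i‖ = r i)
    (hcoin : ∃ i j : Fin I, i ≠ j ∧ c i = c j) :
    ∀ i j : Fin I, c i = c j := by
  obtain ⟨i, j, hij, hcij⟩ := hcoin
  suffices h : ∀ k, c k = c i from fun a b => (h a).trans (h b).symm
  intro k
  rcases eq_or_ne k i with rfl | hki
  · rfl
  rcases eq_or_ne k j with rfl | hkj
  · exact hcij.symm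
  have hsphere := hmax.1.norm_sub_sq_eq_half_of_center_eq hc hr hij hcij hki hkj (hne j) (hne k)
  exact hmax.center_eq hsphere (hc k) (hr k)

/-- If two centers of a maximal equidistant spacing coincide, then all centers
coincide. -/
theorem two_centers_coincide_implies_all {n I : ℕ} (hI : 2 ≤ I)
    (Y : Fin I → Set (EuclideanSpace ℝ (Fin n)))
    (hne : ∀ i, (Y i).Nonempty) (hmax : IsMaximalEquidistant Y)
    (c : Fin I → EuclideanSpace ℝ (Fin n)) (r : Fin I → ℝ)
    (hc : ∀ i, c i ∈ affineSpan ℝ (Y i))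
    (hr : ∀ i, ∀ y ∈ Y i, ‖y - c i‖ = r i)
    (hcoin : ∃ i j : Fin I, i ≠ j ∧ c i = c j) :
    ∀ i j : Fin I, c i = c j :=
  two_centers_coincide_implies_all_general Y hne hmax c r hc hr hcoin
end

section
/- Let Y₁, ..., Y_I ⊂ ℝⁿ be a maximal equidistant spacing whose centers c₁, ..., c_I do not all coincide. Then c₁, ..., c_I form an orthocentric system: for each i, the points c_j (j ≠ i) are affinely independent and c_i is the orthocenter of the simplex they span. -/
open RealInnerProductSpace

/-!
A point of the affine span of `Y i` is equidistant from all of `Y j`, so Pythagoras over the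
center `c j` gives `‖c i - c j‖² = a i + a j` with `a i = 1/2 - r i²`. Seen from `c i`, the Gram
matrix of the vectors `c j - c i` is then `a i + diag (a j)`: this yields the orthogonality
relations, and affine independence as soon as no `a j` vanishes.

If `r k² = 1/2`, every point of the spacing lies at squared distance `1/2` from `c k`, so points
of distinct classes subtend a right angle at `c k` and the point reflection in `c k` preserves the
spacing. By maximality it maps every class onto itself, hence fixes every center, and all centers
coincide with `c k`.
-/

section InnerProductSpace

variable {V : Type*} [NormedAddCommGroup V] [InnerProductSpace ℝ V]

theorem norm_sub_eq_of_mem_affineSpan_s10 {T : Set V} {u v x : V}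
    (h : ∀ y ∈ T, ‖y - u‖ = ‖y - v‖) (hx : x ∈ affineSpan ℝ T) : ‖x - u‖ = ‖x - v‖ := by
  have hT : affineSpan ℝ T ≤ AffineSubspace.perpBisector u v :=
    affineSpan_le.mpr fun y hy => by
      simpa [AffineSubspace.mem_perpBisector_iff_dist_eq, dist_eq_norm] using h y hy
  simpa [AffineSubspace.mem_perpBisector_iff_dist_eq, dist_eq_norm] using hT hx

theorem norm_sub_sq_eq_norm_sub_sq_add_sq {S : Set V} {c x u : V} {r : ℝ}
    (hc : c ∈ affineSpan ℝ S) (hr : ∀ v ∈ S, ‖v - c‖ = r)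
    (hx : ∀ v ∈ S, ‖x - v‖ = ‖x - u‖) (hu : u ∈ S) :
    ‖x - u‖ ^ 2 = ‖x - c‖ ^ 2 + r ^ 2 := by
  have hS : affineSpan ℝ S ≤ AffineSubspace.mk' u (ℝ ∙ (x - c))ᗮ :=
    affineSpan_le.mpr fun v hv => by
      have := EuclideanGeometry.inner_vsub_vsub_of_dist_eq_of_dist_eq (c₁ := c) (c₂ := x)
        (p₁ := u) (p₂ := v) (by simp [dist_eq_norm, hr u hu, hr v hv])
        (by simp [dist_eq_norm, norm_sub_rev _ x, hx v hv])
      simpa [AffineSubspace.mem_mk', Submodule.mem_orthogonal_singleton_iff_inner_right]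
        using this
  have horth : ⟪x - c, c - u⟫ = 0 := by
    simpa [AffineSubspace.mem_mk', Submodule.mem_orthogonal_singleton_iff_inner_right] using hS hc
  rw [← hr u hu, norm_sub_rev u c, ← sub_add_sub_cancel x c u, norm_add_sq_real, horth]
  ring

theorem eq_of_mem_affineSpan_of_norm_sub_eq {S : Set V} {c c' u : V} {r r' : ℝ}
    (hc : c ∈ affineSpan ℝ S) (hc' : c' ∈ affineSpan ℝ S)
    (hr : ∀ v ∈ S, ‖v - c‖ = r) (hr' : ∀ v ∈ S, ‖v - c'‖ = r') (hu : u ∈ S) : c = c' := by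
  have h := norm_sub_sq_eq_norm_sub_sq_add_sq hc hr
    (fun v hv => by rw [norm_sub_rev, hr' v hv, norm_sub_rev, hr' u hu]) hu
  have h' := norm_sub_sq_eq_norm_sub_sq_add_sq hc' hr'
    (fun v hv => by rw [norm_sub_rev, hr v hv, norm_sub_rev, hr u hu]) hu
  rw [norm_sub_rev, hr' u hu, norm_sub_rev c' c] at h
  rw [norm_sub_rev, hr u hu] at h'
  rw [← sub_eq_zero, ← norm_eq_zero, ← sq_eq_zero_iff]
  linarith

theorem AffineIsometry.apply_eq_self_of_image_eq (f : V →ᵃⁱ[ℝ] V) {S : Set V} {c u : V}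
    {r : ℝ} (hf : f '' S = S) (hc : c ∈ affineSpan ℝ S) (hr : ∀ v ∈ S, ‖v - c‖ = r) (hu : u ∈ S) :
    f c = c := by
  have hfc : f c ∈ affineSpan ℝ S := by
    have := AffineSubspace.mem_map_of_mem f.toAffineMap hc
    rwa [AffineSubspace.map_span, AffineIsometry.coe_toAffineMap, hf] at this
  refine eq_of_mem_affineSpan_of_norm_sub_eq hfc hc (r := r) ?_ hr hu
  rw [← hf]
  rintro _ ⟨v, hv, rfl⟩
  rw [← dist_eq_norm, f.dist_map, dist_eq_norm, hr v hv]

theorem norm_pointReflection_sub {p a b : V} (h : ‖a - p‖ ^ 2 + ‖b - p‖ ^ 2 = ‖a - b‖ ^ 2) :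
    ‖AffineIsometryEquiv.pointReflection ℝ p a - b‖ = ‖a - b‖ := by
  have hpar := parallelogram_law_with_norm ℝ (p - a) (p - b)
  rw [AffineIsometryEquiv.pointReflection_apply, vsub_eq_sub, vadd_eq_add,
    ← pow_left_inj₀ (norm_nonneg _) (norm_nonneg _) two_ne_zero]
  rw [norm_sub_rev p a, norm_sub_rev p b, show p - a - (p - b) = b - a by abel,
    norm_sub_rev b a] at hpar
  rw [show p - a + p - b = p - a + (p - b) by abel]
  linear_combination hpar + 2 * h

end InnerProductSpace

section DistancePattern

variable {V ι : Type*} [NormedAddCommGroup V] [InnerProductSpace ℝ V]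
  {p : ι → V} {a : ι → ℝ}

theorem inner_sub_sub_eq_of_norm_sub_sq_eq_add [DecidableEq ι]
    (h : ∀ j k, j ≠ k → ‖p j - p k‖ ^ 2 = a j + a k) {q : V} {b : ℝ} {j k : ι}
    (hj : ‖p j - q‖ ^ 2 = a j + b) (hk : ‖p k - q‖ ^ 2 = a k + b) :
    ⟪p j - q, p k - q⟫ = b + if j = k then a j else 0 := by
  by_cases hjk : j = k
  · subst hjk
    rw [if_pos rfl, real_inner_self_eq_norm_sq, hj, add_comm]
  · have hpol := norm_sub_sq_real (p j - q) (p k - q)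
    rw [sub_sub_sub_cancel_right, h j k hjk, hj, hk] at hpol
    rw [if_neg hjk]
    linarith

theorem inner_sub_sub_eq_zero_of_norm_sub_sq_eq_add
    (h : ∀ j k, j ≠ k → ‖p j - p k‖ ^ 2 = a j + a k) {i j k l : ι}
    (hji : j ≠ i) (hki : k ≠ i) (hli : l ≠ i) (hkj : k ≠ j) (hlj : l ≠ j) :
    ⟪p i - p j, p k - p l⟫ = 0 := by
  classical
  have hik := inner_sub_sub_eq_of_norm_sub_sq_eq_add h (h i j hji.symm) (h k j hkj)
  have hil := inner_sub_sub_eq_of_norm_sub_sq_eq_add h (h i j hji.symm) (h l j hlj)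
  rw [if_neg hki.symm] at hik
  rw [if_neg hli.symm] at hil
  rw [← sub_sub_sub_cancel_right (p k) (p l) (p j), inner_sub_right, hik, hil, sub_self]

theorem affineIndependent_of_norm_sub_sq_eq_add (ha : ∀ j, a j ≠ 0)
    (h : ∀ j k, j ≠ k → ‖p j - p k‖ ^ 2 = a j + a k) {q : V} {b : ℝ}
    (hq : ∀ j, ‖p j - q‖ ^ 2 = a j + b) : AffineIndependent ℝ p := by
  classical
  intro s w hw hv k hk
  rw [s.weightedVSub_eq_weightedVSubOfPoint_of_sum_eq_zero w p hw q,
    Finset.weightedVSubOfPoint_apply] at hv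
  have hgram : ⟪∑ j ∈ s, w j • (p j -ᵥ q), p k - q⟫ = w k * a k := by
    simp only [sum_inner, real_inner_smul_left, vsub_eq_sub,
      inner_sub_sub_eq_of_norm_sub_sq_eq_add h (hq _) (hq k), mul_add, mul_ite, mul_zero,
      Finset.sum_add_distrib, ← Finset.sum_mul, hw, zero_mul, zero_add, Finset.sum_ite_eq',
      if_pos hk]
  rw [hv, inner_zero_left] at hgram
  exact (mul_eq_zero.mp hgram.symm).resolve_right (ha k)

end DistancePattern

namespace IsEquidistant

variable {n I : ℕ} {Y : Fin I → Set (EuclideanSpace ℝ (Fin n))}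

theorem norm_sub_center_sq (hY : IsEquidistant Y) {i j : Fin I} (hij : i ≠ j)
    (hne : (Y j).Nonempty) {c : EuclideanSpace ℝ (Fin n)} {r : ℝ} (hc : c ∈ affineSpan ℝ (Y j))
    (hr : ∀ y ∈ Y j, ‖y - c‖ = r) {x : EuclideanSpace ℝ (Fin n)} (hx : x ∈ Y i) :
    ‖x - c‖ ^ 2 = 1 - r ^ 2 := by
  obtain ⟨u, hu⟩ := hne
  have h := norm_sub_sq_eq_norm_sub_sq_add_sq hc hr
    (fun v hv => by rw [hY i j hij x hx v hv, hY i j hij x hx u hu]) hu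
  rw [hY i j hij x hx u hu] at h
  linarith

theorem norm_center_sub_center_sq (hY : IsEquidistant Y) {i j : Fin I} (hij : i ≠ j)
    (hne : ∀ i, (Y i).Nonempty) {c : Fin I → EuclideanSpace ℝ (Fin n)} {r : Fin I → ℝ}
    (hc : ∀ i, c i ∈ affineSpan ℝ (Y i)) (hr : ∀ i, ∀ y ∈ Y i, ‖y - c i‖ = r i) :
    ‖c i - c j‖ ^ 2 = 1 - r i ^ 2 - r j ^ 2 := by
  obtain ⟨v, hv⟩ := hne j
  have hci : ∀ u ∈ Y j, ‖c i - u‖ = ‖c i - v‖ := fun u hu =>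
    norm_sub_eq_of_mem_affineSpan_s10 (fun y hy => by rw [hY i j hij y hy u hu, hY i j hij y hy v hv])
      (hc i)
  have h := norm_sub_sq_eq_norm_sub_sq_add_sq (hc j) (hr j) hci hv
  rw [norm_sub_rev, hY.norm_sub_center_sq (Ne.symm hij) (hne i) (hc i) (hr i) hv] at h
  linarith

theorem union_image_pointReflection (hY : IsEquidistant Y) {p : EuclideanSpace ℝ (Fin n)}
    (hp : ∀ m, ∀ x ∈ Y m, ‖x - p‖ ^ 2 = 1 / 2) :
    IsEquidistant fun m => Y m ∪ AffineIsometryEquiv.pointReflection ℝ p '' Y m := by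
  set σ := AffineIsometryEquiv.pointReflection ℝ p
  have hσ : ∀ m l, m ≠ l → ∀ x ∈ Y m, ∀ y ∈ Y l, ‖σ x - y‖ = 1 := fun m l hml x hx y hy => by
    rw [norm_pointReflection_sub (by rw [hp m x hx, hp l y hy, hY m l hml x hx y hy]; norm_num),
      hY m l hml x hx y hy]
  rintro m l hml _ (hx | ⟨x, hx, rfl⟩) _ (hy | ⟨y, hy, rfl⟩)
  · exact hY m l hml _ hx _ hy
  · rw [norm_sub_rev]
    exact hσ l m hml.symm y hy _ hx
  · exact hσ m l hml x hx _ hy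
  · rw [← dist_eq_norm, σ.dist_map, dist_eq_norm]
    exact hY m l hml x hx y hy

end IsEquidistant

namespace IsMaximalEquidistant

variable {n I : ℕ} {Y : Fin I → Set (EuclideanSpace ℝ (Fin n))}

theorem image_pointReflection_eq (hY : IsMaximalEquidistant Y) {p : EuclideanSpace ℝ (Fin n)}
    (hp : ∀ m, ∀ x ∈ Y m, ‖x - p‖ ^ 2 = 1 / 2) (m : Fin I) :
    AffineIsometryEquiv.pointReflection ℝ p '' Y m = Y m := by
  have hsub : AffineIsometryEquiv.pointReflection ℝ p '' Y m ⊆ Y m :=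
    Set.union_eq_left.mp (hY.2 _ (hY.1.union_image_pointReflection hp)
      (fun _ => Set.subset_union_left) m)
  refine hsub.antisymm fun x hx => ⟨_, hsub ⟨x, hx, rfl⟩, ?_⟩
  exact AffineIsometryEquiv.pointReflection_involutive (𝕜 := ℝ) p x

theorem center_eq_of_radius_sq_eq_half (hY : IsMaximalEquidistant Y)
    (hne : ∀ i, (Y i).Nonempty) {c : Fin I → EuclideanSpace ℝ (Fin n)} {r : Fin I → ℝ}
    (hc : ∀ i, c i ∈ affineSpan ℝ (Y i)) (hr : ∀ i, ∀ y ∈ Y i, ‖y - c i‖ = r i)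
    {k : Fin I} (hk : r k ^ 2 = 1 / 2) (m : Fin I) : c m = c k := by
  have hp : ∀ m, ∀ x ∈ Y m, ‖x - c k‖ ^ 2 = 1 / 2 := fun m x hx => by
    by_cases hmk : m = k
    · subst hmk
      rw [hr m x hx, hk]
    · rw [hY.1.norm_sub_center_sq hmk (hne k) (hc k) (hr k) hx, hk]
      norm_num
  obtain ⟨u, hu⟩ := hne m
  rw [← AffineIsometryEquiv.pointReflection_fixed_iff (𝕜 := ℝ)]
  exact (AffineIsometryEquiv.pointReflection ℝ (c k)).toAffineIsometry.apply_eq_self_of_image_eq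
    (hY.image_pointReflection_eq hp m) (hc m) (hr m) hu

end IsMaximalEquidistant

theorem centers_are_orthocentric_general {n I : ℕ}
    (Y : Fin I → Set (EuclideanSpace ℝ (Fin n)))
    (hne : ∀ i, (Y i).Nonempty) (hmax : IsMaximalEquidistant Y)
    (c : Fin I → EuclideanSpace ℝ (Fin n)) (r : Fin I → ℝ)
    (hc : ∀ i, c i ∈ affineSpan ℝ (Y i))
    (hr : ∀ i, ∀ y ∈ Y i, ‖y - c i‖ = r i)
    (hncoin : ¬ ∀ i j : Fin I, c i = c j) :
    ∀ i : Fin I,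
      AffineIndependent ℝ (fun j : {j : Fin I // j ≠ i} => c j) ∧
      ∀ j k l : Fin I, j ≠ i → k ≠ i → l ≠ i → k ≠ j → l ≠ j →
        ⟪c i - c j, c k - c l⟫ = 0 := by
  set a : Fin I → ℝ := fun j => 1 / 2 - r j ^ 2
  have hdist : ∀ j k, j ≠ k → ‖c j - c k‖ ^ 2 = a j + a k := fun j k hjk => by
    rw [hmax.1.norm_center_sub_center_sq hjk hne hc hr]
    ring
  have ha : ∀ j, a j ≠ 0 := fun j hj => hncoin fun k l => by
    have hrj : r j ^ 2 = 1 / 2 := (sub_eq_zero.mp hj).symm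
    rw [hmax.center_eq_of_radius_sq_eq_half hne hc hr hrj k,
      hmax.center_eq_of_radius_sq_eq_half hne hc hr hrj l]
  intro i
  exact ⟨affineIndependent_of_norm_sub_sq_eq_add (fun j => ha j)
      (fun j k hjk => hdist j k (Subtype.coe_ne_coe.mpr hjk)) (fun j => hdist j i j.2),
    fun _ _ _ hji hki hli hkj hlj =>
      inner_sub_sub_eq_zero_of_norm_sub_sq_eq_add hdist hji hki hli hkj hlj⟩

/-- Centers are Orthocentric Systems: if the centers of a maximal equidistant
spacing do not all coincide, then for each `i` the remaining centers are
affinely independent and `c i` is the orthocenter of the simplex they span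
(i.e. for every vertex `c j` with `j ≠ i`, the segment from `c i` to `c j` is
orthogonal to all edges of the opposite face). -/
theorem centers_are_orthocentric {n I : ℕ} (hI : 2 ≤ I)
    (Y : Fin I → Set (EuclideanSpace ℝ (Fin n)))
    (hne : ∀ i, (Y i).Nonempty) (hmax : IsMaximalEquidistant Y)
    (c : Fin I → EuclideanSpace ℝ (Fin n)) (r : Fin I → ℝ)
    (hc : ∀ i, c i ∈ affineSpan ℝ (Y i))
    (hr : ∀ i, ∀ y ∈ Y i, ‖y - c i‖ = r i)
    (hncoin : ¬ ∀ i j : Fin I, c i = c j) :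
    ∀ i : Fin I,
      AffineIndependent ℝ (fun j : {j : Fin I // j ≠ i} => c j) ∧
      ∀ j k l : Fin I, j ≠ i → k ≠ i → l ≠ i → k ≠ j → l ≠ j →
        ⟪c i - c j, c k - c l⟫ = 0 :=
  centers_are_orthocentric_general Y hne hmax c r hc hr hncoin
end

section
/- Let Y ⊂ ℝⁿ and Y' ⊂ ℝⁿ' be finite nonempty sets with circumcenters c, c' and extents ext(Y) = ‖y - c‖ (constant over y ∈ Y) and ext(Y') = ‖y' - c'‖. If ext(Y)² + ext(Y')² ≤ 1, then there exist isometric embeddings f: ℝⁿ → ℝ^{n+n'+1} and f': ℝⁿ' → ℝ^{n+n'+1} such that ‖f(y) - f'(y')‖ = 1 for all y ∈ Y, y' ∈ Y'. -/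
/-!
Centre `Y` at the origin of the first factor and `Y'` at the origin of the second factor of the
orthogonal sum `E ⊕ E' ⊕ ℝ`, and lift `Y'` to height `t = √(1 - a² - b²)` in the last factor.
By Pythagoras every point of `Y` is then at distance `√(a² + b² + t²) = 1` from every point
of `Y'`, and counting dimensions identifies the orthogonal sum isometrically with `ℝ^(n+n'+1)`.
-/

open Module

noncomputable def LinearIsometryEquiv.ofFinrankEq {𝕜 E F : Type*} [RCLike 𝕜]
    [NormedAddCommGroup E] [InnerProductSpace 𝕜 E] [FiniteDimensional 𝕜 E]
    [NormedAddCommGroup F] [InnerProductSpace 𝕜 F] [FiniteDimensional 𝕜 F]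
    (h : finrank 𝕜 E = finrank 𝕜 F) : E ≃ₗᵢ[𝕜] F :=
  ((stdOrthonormalBasis 𝕜 E).reindex (finCongr h)).repr.trans (stdOrthonormalBasis 𝕜 F).repr.symm

theorem WithLp.finrank_prod {R E E' : Type*} [Ring R] [StrongRankCondition R]
    [AddCommGroup E] [Module R E] [Module.Free R E] [Module.Finite R E]
    [AddCommGroup E'] [Module R E'] [Module.Free R E'] [Module.Finite R E'] (p : ENNReal) :
    finrank R (WithLp p (E × E')) = finrank R E + finrank R E' :=
  (WithLp.linearEquiv p R (E × E')).finrank_eq.trans Module.finrank_prod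

section Gluing

open WithLp

variable {E E' : Type*} [SeminormedAddCommGroup E] [SeminormedAddCommGroup E']

def glueLeft (c y : E) : WithLp 2 (WithLp 2 (E × E') × ℝ) :=
  toLp 2 (toLp 2 (y - c, 0), 0)

def glueRight (c' : E') (t : ℝ) (y' : E') : WithLp 2 (WithLp 2 (E × E') × ℝ) :=
  toLp 2 (toLp 2 (0, y' - c'), t)

theorem isometry_glueLeft (c : E) : Isometry (glueLeft (E' := E') c) :=
  Isometry.of_dist_eq fun y₁ y₂ => by simp [glueLeft, dist_eq_norm, ← toLp_sub]

theorem isometry_glueRight (c' : E') (t : ℝ) : Isometry (glueRight (E := E) c' t) :=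
  Isometry.of_dist_eq fun y₁ y₂ => by simp [glueRight, dist_eq_norm, ← toLp_sub]

theorem norm_glueLeft_sub_glueRight_sq (c y : E) (c' y' : E') (t : ℝ) :
    ‖glueLeft c y - glueRight c' t y'‖ ^ 2 = ‖y - c‖ ^ 2 + ‖y' - c'‖ ^ 2 + t ^ 2 := by
  simp [glueLeft, glueRight, ← toLp_sub, prod_norm_sq_eq_of_L2, norm_sub_rev c' y']

end Gluing

theorem exists_isometry_norm_sub_eq_one {E E' F : Type*}
    [NormedAddCommGroup E] [InnerProductSpace ℝ E] [FiniteDimensional ℝ E]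
    [NormedAddCommGroup E'] [InnerProductSpace ℝ E'] [FiniteDimensional ℝ E']
    [NormedAddCommGroup F] [InnerProductSpace ℝ F] [FiniteDimensional ℝ F]
    (hF : finrank ℝ F = finrank ℝ E + finrank ℝ E' + 1) {Y : Set E} {Y' : Set E'}
    {c : E} {c' : E'} {a b : ℝ} (ha : ∀ y ∈ Y, ‖y - c‖ = a) (hb : ∀ y' ∈ Y', ‖y' - c'‖ = b)
    (hab : a ^ 2 + b ^ 2 ≤ 1) :
    ∃ (f : E → F) (f' : E' → F), Isometry f ∧ Isometry f' ∧
      ∀ y ∈ Y, ∀ y' ∈ Y', ‖f y - f' y'‖ = 1 := by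
  have hG : finrank ℝ (WithLp 2 (WithLp 2 (E × E') × ℝ)) = finrank ℝ F := by
    rw [WithLp.finrank_prod, WithLp.finrank_prod, finrank_self, hF]
  let Φ := LinearIsometryEquiv.ofFinrankEq hG
  set t := √(1 - a ^ 2 - b ^ 2)
  refine ⟨Φ ∘ glueLeft c, Φ ∘ glueRight c' t, Φ.isometry.comp (isometry_glueLeft c),
    Φ.isometry.comp (isometry_glueRight c' t), fun y hy y' hy' => ?_⟩
  rw [Function.comp_apply, Function.comp_apply, ← map_sub, LinearIsometryEquiv.norm_map,
    ← sq_eq_sq₀ (norm_nonneg _) zero_le_one, norm_glueLeft_sub_glueRight_sq, ha y hy, hb y' hy',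
    Real.sq_sqrt (by linarith)]
  ring

theorem gluing_of_spacings_general {n n' : ℕ}
    (Y : Set (EuclideanSpace ℝ (Fin n))) (Y' : Set (EuclideanSpace ℝ (Fin n')))
    (c : EuclideanSpace ℝ (Fin n)) (c' : EuclideanSpace ℝ (Fin n')) (a b : ℝ)
    (ha : ∀ y ∈ Y, ‖y - c‖ = a) (hb : ∀ y' ∈ Y', ‖y' - c'‖ = b)
    (hab : a ^ 2 + b ^ 2 ≤ 1) :
    ∃ (f : EuclideanSpace ℝ (Fin n) → EuclideanSpace ℝ (Fin (n + n' + 1)))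
      (f' : EuclideanSpace ℝ (Fin n') → EuclideanSpace ℝ (Fin (n + n' + 1))),
      Isometry f ∧ Isometry f' ∧
      ∀ y ∈ Y, ∀ y' ∈ Y', ‖f y - f' y'‖ = 1 :=
  exists_isometry_norm_sub_eq_one (by simp) ha hb hab

/-- Gluing: if two finite nonempty sets lie on spheres of radii (extents) `a`
and `b` around their circumcenters and `a² + b² ≤ 1`, then they can be
isometrically embedded into `ℝ^(n+n'+1)` so that every point of the first is at
distance 1 from every point of the second. -/
theorem gluing_of_spacings {n n' : ℕ}
    (Y : Set (EuclideanSpace ℝ (Fin n))) (Y' : Set (EuclideanSpace ℝ (Fin n')))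
    (hfin : Y.Finite) (hfin' : Y'.Finite)
    (hne : Y.Nonempty) (hne' : Y'.Nonempty)
    (c : EuclideanSpace ℝ (Fin n)) (c' : EuclideanSpace ℝ (Fin n')) (a b : ℝ)
    (ha : ∀ y ∈ Y, ‖y - c‖ = a) (hb : ∀ y' ∈ Y', ‖y' - c'‖ = b)
    (hab : a ^ 2 + b ^ 2 ≤ 1) :
    ∃ (f : EuclideanSpace ℝ (Fin n) → EuclideanSpace ℝ (Fin (n + n' + 1)))
      (f' : EuclideanSpace ℝ (Fin n') → EuclideanSpace ℝ (Fin (n + n' + 1))),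
      Isometry f ∧ Isometry f' ∧
      ∀ y ∈ Y, ∀ y' ∈ Y', ‖f y - f' y'‖ = 1 :=
  gluing_of_spacings_general Y Y' c c' a b ha hb hab
end

section
/- Let Y₁, ..., Y_I ⊂ ℝⁿ be a maximal equidistant spacing with I ≥ 3 whose centers all coincide at a point c. Then r_i = √2/2 for every class i, where r_i is the radius of Y_i. -/
open RealInnerProductSpace

theorem sq_add_norm_sub_sq_eq_of_mem_affineSpan {E : Type*} [NormedAddCommGroup E]
    [InnerProductSpace ℝ E] {s : Set E} {c z : E} {r d : ℝ} (hc : c ∈ affineSpan ℝ s)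
    (hr : ∀ y ∈ s, ‖y - c‖ = r) (hd : ∀ y ∈ s, ‖y - z‖ = d) :
    r ^ 2 + ‖z - c‖ ^ 2 = d ^ 2 := by
  have hinner : ∀ y ∈ s, ⟪z - c, y - c⟫ = (r ^ 2 + ‖z - c‖ ^ 2 - d ^ 2) / 2 := by
    intro y hy
    have h := norm_sub_sq_real (y - c) (z - c)
    rw [sub_sub_sub_cancel_right, hr y hy, hd y hy] at h
    rw [real_inner_comm]
    linarith
  have hspan := AffineMap.eqOn_affineSpan (f := (innerₛₗ ℝ (z - c)).toAffineMap)
    (g := AffineMap.const ℝ E (⟪z - c, c⟫ + (r ^ 2 + ‖z - c‖ ^ 2 - d ^ 2) / 2)) ?_ hc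
  · simp only [LinearMap.coe_toAffineMap, innerₛₗ_apply_apply, AffineMap.const_apply] at hspan
    linarith
  intro y hy
  simp only [LinearMap.coe_toAffineMap, innerₛₗ_apply_apply, AffineMap.const_apply]
  rw [← hinner y hy, inner_sub_right, add_sub_cancel]

theorem eq_sqrt_two_div_two_of_sq_add_sq {a b c : ℝ} (ha : 0 ≤ a) (hab : a ^ 2 + b ^ 2 = 1)
    (hac : a ^ 2 + c ^ 2 = 1) (hbc : b ^ 2 + c ^ 2 = 1) : a = √2 / 2 := by
  have ha2 : a ^ 2 = (√2 / 2) ^ 2 := by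
    rw [div_pow, Real.sq_sqrt zero_le_two]
    linarith
  exact (pow_left_inj₀ ha (by positivity) two_ne_zero).1 ha2

theorem coinciding_centers_radius_general {n I : ℕ} (hI : 3 ≤ I)
    (Y : Fin I → Set (EuclideanSpace ℝ (Fin n)))
    (hmax : IsMaximalEquidistant Y)
    (c : Fin I → EuclideanSpace ℝ (Fin n)) (r : Fin I → ℝ)
    (hc : ∀ i, c i ∈ affineSpan ℝ (Y i))
    (hr : ∀ i, ∀ y ∈ Y i, ‖y - c i‖ = r i)
    (c0 : EuclideanSpace ℝ (Fin n)) (hcoin : ∀ i, c i = c0) :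
    ∀ i, r i = Real.sqrt 2 / 2 := by
  have hne : ∀ i, (Y i).Nonempty := fun i => (affineSpan_nonempty ℝ).1 ⟨c i, hc i⟩
  have hsq : ∀ i j, i ≠ j → r i ^ 2 + r j ^ 2 = 1 := by
    intro i j hij
    obtain ⟨z, hz⟩ := hne j
    have h := sq_add_norm_sub_sq_eq_of_mem_affineSpan (hcoin i ▸ hc i) (hcoin i ▸ hr i)
      (fun y hy => hmax.1 i j hij y hy z hz)
    rwa [← hcoin j, hr j z hz, one_pow] at h
  intro i
  obtain ⟨j, hji, -⟩ := Fin.exists_ne_and_ne_of_two_lt i i hI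
  obtain ⟨k, hki, hkj⟩ := Fin.exists_ne_and_ne_of_two_lt i j hI
  obtain ⟨y, hy⟩ := hne i
  exact eq_sqrt_two_div_two_of_sq_add_sq (hr i y hy ▸ norm_nonneg _)
    (hsq i j hji.symm) (hsq i k hki.symm) (hsq j k hkj.symm)

/-- For a maximal equidistant spacing with at least three classes whose centers
all coincide, every radius equals `√2 / 2`. -/
theorem coinciding_centers_radius {n I : ℕ} (hI : 3 ≤ I)
    (Y : Fin I → Set (EuclideanSpace ℝ (Fin n)))
    (hne : ∀ i, (Y i).Nonempty) (hmax : IsMaximalEquidistant Y)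
    (c : Fin I → EuclideanSpace ℝ (Fin n)) (r : Fin I → ℝ)
    (hc : ∀ i, c i ∈ affineSpan ℝ (Y i))
    (hr : ∀ i, ∀ y ∈ Y i, ‖y - c i‖ = r i)
    (c0 : EuclideanSpace ℝ (Fin n)) (hcoin : ∀ i, c i = c0) :
    ∀ i, r i = Real.sqrt 2 / 2 :=
  coinciding_centers_radius_general hI Y hmax c r hc hr c0 hcoin
end

section
/- Let △ be a simplex in ℝⁿ with vertices x₁, ..., x_k admitting an orthocenter x* (i.e., x* - x_i is orthogonal to x_j - x_l for all j, l distinct from i, for each i). Let J ⊆ {1,...,k} and let A_J be the affine hull of {x_j : j ∈ J}. Then the orthogonal projection of x* onto A_J is the orthocenter of the face spanned by {x_j : j ∈ J}. -/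
open RealInnerProductSpace

theorem orthocenter_projects_to_face_orthocenter_general {n k : ℕ}
    (x : Fin k → EuclideanSpace ℝ (Fin n))
    (xstar : EuclideanSpace ℝ (Fin n))
    (horth : ∀ i j l : Fin k, j ≠ i → l ≠ i → ⟪xstar - x i, x j - x l⟫ = 0)
    (J : Set (Fin k)) (p : EuclideanSpace ℝ (Fin n))
    (hp2 : ∀ z ∈ affineSpan ℝ (x '' J), ⟪xstar - p, z - p⟫ = 0) :
    ∀ j ∈ J, ∀ a ∈ J, ∀ b ∈ J, a ≠ j → b ≠ j →
      ⟪p - x j, x a - x b⟫ = 0 := by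
  intro j _ a ha b hb haj hbj
  have hvertex : ∀ c ∈ J, ⟪xstar - p, x c - p⟫ = 0 := fun c hc =>
    hp2 _ (subset_affineSpan ℝ _ ⟨c, hc, rfl⟩)
  have hface : ⟪xstar - p, x a - x b⟫ = 0 := by
    rw [← sub_sub_sub_cancel_right (x a) (x b) p, inner_sub_right, hvertex a ha,
      hvertex b hb, sub_zero]
  calc ⟪p - x j, x a - x b⟫
      = ⟪xstar - x j, x a - x b⟫ - ⟪xstar - p, x a - x b⟫ := by
        rw [← inner_sub_left, sub_sub_sub_cancel_left]
    _ = 0 := by rw [horth j a b haj hbj, hface, sub_zero]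

/-- Orthocentricity is invariant under face projection: if `xstar` is the
orthocenter of the simplex with vertices `x 1, ..., x k` and `p` is the
orthogonal projection of `xstar` onto the affine hull of the face with vertex
set `J`, then `p` is the orthocenter of that face. -/
theorem orthocenter_projects_to_face_orthocenter {n k : ℕ}
    (x : Fin k → EuclideanSpace ℝ (Fin n)) (hindep : AffineIndependent ℝ x)
    (xstar : EuclideanSpace ℝ (Fin n))
    (horth : ∀ i j l : Fin k, j ≠ i → l ≠ i → ⟪xstar - x i, x j - x l⟫ = 0)
    (J : Set (Fin k)) (p : EuclideanSpace ℝ (Fin n))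
    (hp1 : p ∈ affineSpan ℝ (x '' J))
    (hp2 : ∀ z ∈ affineSpan ℝ (x '' J), ⟪xstar - p, z - p⟫ = 0) :
    ∀ j ∈ J, ∀ a ∈ J, ∀ b ∈ J, a ≠ j → b ≠ j →
      ⟪p - x j, x a - x b⟫ = 0 :=
  orthocenter_projects_to_face_orthocenter_general x xstar horth J p hp2
end
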